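/- Let S and r be parameters with 0 < S < 4r, and let u₀ be the standing wave. Then there exists a constant C > 0 such that lim_{x→+∞} u₀(x)·e^{√S·x} = C, lim_{x→−∞} (1 − u₀(x))·e^{−√S·x} = C, and lim_{x→+∞} u₀'(x)·e^{√S·x} = −√S·C. -/

import Mathlib

/-!
With `P = wavePotential S r` and `τ(u) = (4S/r)(u - u²)`, multiplying the equation by
`2 u₀' e^{-τ(u₀)}` shows that `(u₀'² - P(u₀)) e^{-τ(u₀)}` is constant. As `u₀ → 0`, `u₀'²` tends
to this constant, and a derivative with a limit at `+∞` of a convergent function tends to `0`;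
hence the constant vanishes and `u₀' = -√P(u₀)`.
As `P(u) = S u² + O(u³)`, this gives `u₀' + √S u₀ = O(u₀²)`, so `(log u₀ + √S x)'` is integrable
at `+∞` and `u₀ e^{√S x}` converges to some `C > 0`. Finally `P(1 - u) = P(u)`, so
`x ↦ 1 - u₀(-x)` solves the same first-order equation with the same value at `0`; uniqueness for
Lipschitz vector fields gives `1 - u₀(-x) = u₀(x)`, which carries the limit over to `-∞`.
-/

open Real Filter Topology

noncomputable def fpoly (u : ℝ) : ℝ := u * (2 * u - 1) * (1 - u)

open Set MeasureTheory Asymptotics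

theorem eq_zero_of_tendsto_deriv_atTop {f : ℝ → ℝ} {a L : ℝ} (hf : Differentiable ℝ f)
    (hfa : Tendsto f atTop (𝓝 a)) (hf' : Tendsto (deriv f) atTop (𝓝 L)) : L = 0 := by
  choose ξ hξ hξf using fun x : ℝ =>
    exists_deriv_eq_slope f (lt_add_one x) hf.continuous.continuousOn hf.differentiableOn
  have hξ_top : Tendsto ξ atTop atTop :=
    tendsto_atTop_mono (fun x => (hξ x).1.le) tendsto_id
  have hdiff : Tendsto (fun x => f (x + 1) - f x) atTop (𝓝 (a - a)) :=
    (hfa.comp (tendsto_atTop_add_const_right _ 1 tendsto_id)).sub hfa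
  refine tendsto_nhds_unique (hf'.comp hξ_top) ?_
  simpa [Function.comp_def, hξf] using hdiff

theorem integrableOn_Ioi_of_deriv_le_neg_mul {v : ℝ → ℝ} {c N : ℝ} (hc : 0 < c)
    (hv : Differentiable ℝ v) (hpos : ∀ x, 0 ≤ v x) (hlim : Tendsto v atTop (𝓝 0))
    (hder : ∀ x ∈ Ioi N, deriv v x ≤ -(c * v x)) : IntegrableOn v (Ioi N) := by
  have hint : IntegrableOn (fun x => -deriv v x) (Ioi N) :=
    integrableOn_Ioi_deriv_of_nonneg' (g := fun x => -v x) (l := -0)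
      (fun x _ => (hv x).hasDerivAt.neg)
      (fun x hx => by nlinarith [hder x hx, hpos x]) hlim.neg
  refine (hint.const_mul c⁻¹).mono' hv.continuous.aestronglyMeasurable.restrict ?_
  filter_upwards [ae_restrict_mem measurableSet_Ioi] with x hx
  rw [norm_of_nonneg (hpos x), le_inv_mul_iff₀ hc]
  linarith [hder x hx]

section PerturbedLinearDecay

variable {v : ℝ → ℝ} {a K : ℝ}

theorem exists_tendsto_log_add_mul (ha : 0 < a) (hv : Differentiable ℝ v)
    (hpos : ∀ x, 0 < v x) (hlim : Tendsto v atTop (𝓝 0))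
    (hest : ∀ᶠ x in atTop, |deriv v x + a * v x| ≤ K * v x ^ 2) :
    ∃ ℓ, Tendsto (fun x => log (v x) + a * x) atTop (𝓝 ℓ) := by
  have hsmall : ∀ᶠ x in atTop, K * v x ≤ a / 2 :=
    (by simpa using hlim.const_mul K : Tendsto (fun x => K * v x) atTop (𝓝 0)).eventually
      (eventually_le_nhds (by linarith))
  obtain ⟨N, hN⟩ := eventually_atTop.1 (hest.and hsmall)
  have hK : 0 ≤ K := by
    have := (abs_nonneg _).trans (hN N le_rfl).1
    exact nonneg_of_mul_nonneg_left this (pow_pos (hpos N) 2)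
  -- `|(log v + a x)'| ≤ K v`, and `v` is integrable since `v' ≤ -(a/2) v` eventually.
  have hg' : ∀ x, HasDerivAt (fun x => log (v x) + a * x) ((deriv v x + a * v x) / v x) x := by
    intro x
    refine (((hv x).hasDerivAt.log (hpos x).ne').add
      ((hasDerivAt_id' x).const_mul a)).congr_deriv ?_
    field_simp [(hpos x).ne']
  have hvint : IntegrableOn v (Ioi N) := by
    refine integrableOn_Ioi_of_deriv_le_neg_mul (c := a / 2) (by linarith) hv
      (fun x => (hpos x).le) hlim fun x hx => ?_
    obtain ⟨hest_x, hsmall_x⟩ := hN x (le_of_lt hx)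
    nlinarith [(abs_le.1 hest_x).2, hpos x]
  have hgint : IntegrableOn (fun x => (deriv v x + a * v x) / v x) (Ioi N) := by
    refine (hvint.const_mul K).mono' ?_ ?_
    · exact (((measurable_deriv v).add (measurable_const.mul hv.continuous.measurable)).div
        hv.continuous.measurable).aestronglyMeasurable
    · filter_upwards [ae_restrict_mem measurableSet_Ioi] with x hx
      rw [norm_div, norm_of_nonneg (hpos x).le, div_le_iff₀ (hpos x), Real.norm_eq_abs]
      linarith [(hN x (le_of_lt hx)).1]
  exact ⟨_, tendsto_limUnder_of_hasDerivAt_of_integrableOn_Ioi (fun x _ => hg' x) hgint⟩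

theorem exists_tendsto_mul_exp_of_abs_deriv_add_le (ha : 0 < a) (hv : Differentiable ℝ v)
    (hpos : ∀ x, 0 < v x) (hlim : Tendsto v atTop (𝓝 0))
    (hest : ∀ᶠ x in atTop, |deriv v x + a * v x| ≤ K * v x ^ 2) :
    ∃ C, 0 < C ∧ Tendsto (fun x => v x * exp (a * x)) atTop (𝓝 C) ∧
      Tendsto (fun x => deriv v x * exp (a * x)) atTop (𝓝 (-a * C)) := by
  obtain ⟨ℓ, hℓ⟩ := exists_tendsto_log_add_mul ha hv hpos hlim hest
  have hC : Tendsto (fun x => v x * exp (a * x)) atTop (𝓝 (exp ℓ)) := by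
    refine ((continuous_exp.tendsto ℓ).comp hℓ).congr fun x => ?_
    simp [exp_add, exp_log (hpos x)]
  have hrem : Tendsto (fun x => (deriv v x + a * v x) * exp (a * x)) atTop (𝓝 0) := by
    have hbound : Tendsto (fun x => K * v x * (v x * exp (a * x))) atTop (𝓝 0) := by
      simpa using (hlim.const_mul K).mul hC
    refine squeeze_zero_norm' ?_ hbound
    filter_upwards [hest] with x hx
    rw [norm_mul, Real.norm_eq_abs, norm_of_nonneg (exp_pos _).le]
    nlinarith [exp_pos (a * x)]
  refine ⟨exp ℓ, exp_pos ℓ, hC, ?_⟩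
  convert hrem.sub (hC.const_mul a) using 1
  · ext x; ring
  · ring_nf

end PerturbedLinearDecay

-- Along the standing wave, `u₀'² = wavePotential S r u₀` (`sq_deriv_eq_wavePotential`).
noncomputable def wavePotential (S r y : ℝ) : ℝ :=
  r ^ 2 / (8 * S) * (exp (4 * S / r * (y - y ^ 2)) - 1 - 4 * S / r * (y - y ^ 2))

namespace wavePotential

variable {S r : ℝ}

theorem one_sub (S r y : ℝ) : wavePotential S r (1 - y) = wavePotential S r y := by
  simp only [wavePotential, show (1 - y) - (1 - y) ^ 2 = y - y ^ 2 by ring]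

theorem pos (hS : 0 < S) (hr : 0 < r) {y : ℝ} (hy : y ∈ Ioo 0 1) : 0 < wavePotential S r y := by
  have ht : 0 < 4 * S / r * (y - y ^ 2) := mul_pos (by positivity) (by nlinarith [hy.1, hy.2])
  have := add_one_lt_exp ht.ne'
  unfold wavePotential
  exact mul_pos (by positivity) (by linarith)

theorem contDiff (S r : ℝ) {n : WithTop ℕ∞} : ContDiff ℝ n (wavePotential S r) := by
  unfold wavePotential
  fun_prop

theorem hasDerivAt (S r y : ℝ) :
    HasDerivAt (wavePotential S r)
      (r ^ 2 / (8 * S) * ((exp (4 * S / r * (y - y ^ 2)) - 1) * (4 * S / r * (1 - 2 * y)))) y := by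
  have hτ : HasDerivAt (fun y => 4 * S / r * (y - y ^ 2)) (4 * S / r * (1 - 2 * y)) y :=
    (((hasDerivAt_id' y).sub (hasDerivAt_pow 2 y)).const_mul (4 * S / r)).congr_deriv (by ring)
  exact (((hτ.exp.sub_const 1).sub hτ).const_mul (r ^ 2 / (8 * S))).congr_deriv (by ring)

theorem sub_mul_sq_isBigO (hS : S ≠ 0) (hr : r ≠ 0) :
    (fun y => wavePotential S r y - S * y ^ 2) =O[𝓝 0] (fun y => y ^ 3) := by
  set τ : ℝ → ℝ := fun y => 4 * S / r * (y - y ^ 2)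
  have hτ : HasDerivAt τ (4 * S / r * (1 - 2 * 0)) 0 :=
    (((hasDerivAt_id' 0).sub (hasDerivAt_pow 2 0)).const_mul (4 * S / r)).congr_deriv (by ring)
  have hτ0 : Tendsto τ (𝓝 0) (𝓝 0) := by
    simpa [τ] using hτ.continuousAt.tendsto
  have hexp : (fun y => exp (τ y) - (1 + τ y + τ y ^ 2 / 2)) =O[𝓝 0] (fun y => y ^ 3) := by
    have h := ((Real.exp_sub_sum_range_isBigO_pow 3).comp_tendsto hτ0).trans
      ((by simpa [τ] using hτ.isBigO_sub : τ =O[𝓝 0] fun y => y).pow 3)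
    refine h.congr_left fun y => ?_
    simp [Finset.sum_range_succ]
  have hquad : (fun y => S * ((y - y ^ 2) ^ 2 - y ^ 2)) =O[𝓝 0] (fun y => y ^ 3) := by
    have h : (fun y : ℝ => S * (y - 2)) =O[𝓝 0] (fun _ => (1 : ℝ)) :=
      (continuous_const.mul (continuous_id.sub continuous_const)).continuousAt.isBigO_one ℝ
    refine (h.mul (isBigO_refl (fun y : ℝ => y ^ 3) _)).congr (fun y => by ring) fun y => by ring
  refine ((hexp.const_mul_left (r ^ 2 / (8 * S))).add hquad).congr_left fun y => ?_
  simp only [wavePotential, τ]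
  field_simp
  ring

theorem exists_lipschitzOnWith_neg_sqrt (hS : 0 < S) (hr : 0 < r) {m M : ℝ} (hm : 0 < m)
    (hM : M < 1) : ∃ K, LipschitzOnWith K (fun y => -√(wavePotential S r y)) (Icc m M) := by
  refine ContDiffOn.exists_lipschitzOnWith (n := 1) ?_ one_ne_zero (convex_Icc m M) isCompact_Icc
  refine ((contDiff S r).contDiffOn.sqrt fun y hy => ?_).neg
  exact (pos hS hr ⟨hm.trans_le hy.1, hy.2.trans_lt hM⟩).ne'

end wavePotential

section StandingWave

variable {S r : ℝ}

theorem exists_sq_deriv_sub_wavePotential_mul_exp_eq (hS : S ≠ 0) (hr : r ≠ 0) {u : ℝ → ℝ}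
    (hu : Differentiable ℝ u) (hu' : Differentiable ℝ (deriv u))
    (hode : ∀ x, deriv (deriv u) x + S * fpoly (u x)
      + (2 * S / r) * (2 * u x - 1) * (deriv u x) ^ 2 = 0) :
    ∃ c, ∀ x, (deriv u x ^ 2 - wavePotential S r (u x)) * exp (-(4 * S / r * (u x - u x ^ 2)))
      = c := by
  have hF : ∀ x, HasDerivAt (fun x => (deriv u x ^ 2 - wavePotential S r (u x)) *
      exp (-(4 * S / r * (u x - u x ^ 2)))) 0 x := by
    intro x
    have hux := (hu x).hasDerivAt
    have hτ : HasDerivAt (fun x => -(4 * S / r * (u x - u x ^ 2)))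
        (-(4 * S / r * (deriv u x - 2 * u x * deriv u x))) x :=
      ((hux.sub (hux.pow 2)).const_mul _).neg.congr_deriv (by ring)
    refine ((((hu' x).hasDerivAt.pow 2).sub
      ((wavePotential.hasDerivAt S r (u x)).comp x hux)).mul hτ.exp).congr_deriv ?_
    have hdd : deriv (deriv u) x =
        -(S * fpoly (u x)) - 2 * S / r * (2 * u x - 1) * deriv u x ^ 2 := by
      linarith [hode x]
    simp only [Pi.sub_apply, Pi.pow_apply, Function.comp_apply, hdd, fpoly, wavePotential]
    generalize rexp (4 * S / r * (u x - u x ^ 2)) = E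
    generalize rexp (-(4 * S / r * (u x - u x ^ 2))) = E'
    field_simp
    ring
  exact ⟨_, fun x => is_const_of_deriv_eq_zero (fun x => (hF x).differentiableAt)
    (fun x => (hF x).deriv) x 0⟩

theorem sq_deriv_eq_wavePotential (hS : S ≠ 0) (hr : r ≠ 0) {u : ℝ → ℝ}
    (hu : Differentiable ℝ u) (hu' : Differentiable ℝ (deriv u))
    (hode : ∀ x, deriv (deriv u) x + S * fpoly (u x)
      + (2 * S / r) * (2 * u x - 1) * (deriv u x) ^ 2 = 0)
    (hlim : Tendsto u atTop (𝓝 0)) (hnonpos : ∀ x, deriv u x ≤ 0) (x : ℝ) :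
    deriv u x ^ 2 = wavePotential S r (u x) := by
  obtain ⟨c, hc⟩ := exists_sq_deriv_sub_wavePotential_mul_exp_eq hS hr hu hu' hode
  have hsq : ∀ x, deriv u x ^ 2 =
      c * exp (4 * S / r * (u x - u x ^ 2)) + wavePotential S r (u x) := by
    intro x
    have := hc x
    rw [exp_neg, ← div_eq_mul_inv, div_eq_iff (exp_pos _).ne'] at this
    linarith
  have hsq_lim : Tendsto (fun x => deriv u x ^ 2) atTop (𝓝 c) := by
    have hcont : Continuous fun y => c * exp (4 * S / r * (y - y ^ 2)) + wavePotential S r y :=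
      (continuous_const.mul (by fun_prop)).add (wavePotential.contDiff S r (n := 0)).continuous
    convert (hcont.tendsto 0).comp hlim using 2
    · exact hsq _
    · simp [wavePotential]
  have hd_lim : Tendsto (deriv u) atTop (𝓝 (-√c)) := by
    refine ((continuous_sqrt.tendsto c).comp hsq_lim).neg.congr fun x => ?_
    simp [sqrt_sq_eq_abs, abs_of_nonpos (hnonpos x)]
  have hc0 : c = 0 := by
    refine tendsto_nhds_unique hsq_lim ?_
    have := eq_zero_of_tendsto_deriv_atTop hu hlim hd_lim
    simpa [neg_eq_zero.1 this] using hd_lim.pow 2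
  simp [hsq x, hc0]

theorem eqOn_Ici_of_hasDerivAt_neg_sqrt_wavePotential (hS : 0 < S) (hr : 0 < r) {f g : ℝ → ℝ}
    (hf : ∀ t, HasDerivAt f (-√(wavePotential S r (f t))) t)
    (hg : ∀ t, HasDerivAt g (-√(wavePotential S r (g t))) t)
    (hf01 : ∀ t, f t ∈ Ioo 0 1) (hg01 : ∀ t, g t ∈ Ioo 0 1) (h0 : f 0 = g 0) :
    EqOn f g (Ici 0) := by
  intro x hx
  have hanti : ∀ h : ℝ → ℝ, (∀ t, HasDerivAt h (-√(wavePotential S r (h t))) t) → Antitone h :=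
    fun h hh => antitone_of_deriv_nonpos (fun t => (hh t).differentiableAt)
      fun t => (hh t).deriv ▸ neg_nonpos.2 (sqrt_nonneg _)
  obtain ⟨K, hK⟩ := wavePotential.exists_lipschitzOnWith_neg_sqrt hS hr
    (lt_min (hf01 x).1 (hg01 x).1) (hf01 0).2
  have hf_mem : ∀ t ∈ Ico 0 x, f t ∈ Icc (min (f x) (g x)) (f 0) := fun t ht =>
    ⟨(min_le_left _ _).trans (hanti f hf ht.2.le), hanti f hf ht.1⟩
  have hg_mem : ∀ t ∈ Ico 0 x, g t ∈ Icc (min (f x) (g x)) (f 0) := fun t ht =>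
    ⟨(min_le_right _ _).trans (hanti g hg ht.2.le), h0 ▸ hanti g hg ht.1⟩
  have hcont : ∀ h : ℝ → ℝ, (∀ t, HasDerivAt h (-√(wavePotential S r (h t))) t) →
      Continuous h := fun h hh => continuous_iff_continuousAt.2 fun t => (hh t).continuousAt
  exact ODE_solution_unique_of_mem_Icc_right (v := fun _ y => -√(wavePotential S r y))
    (fun _ _ => hK) (hcont f hf).continuousOn (fun t _ => (hf t).hasDerivWithinAt) hf_mem
    (hcont g hg).continuousOn (fun t _ => (hg t).hasDerivWithinAt) hg_mem h0 ⟨hx, le_rfl⟩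

theorem eventually_abs_deriv_add_sqrt_mul_le (hS : 0 < S) (hr : r ≠ 0) {v : ℝ → ℝ}
    (hpos : ∀ x, 0 < v x) (hlim : Tendsto v atTop (𝓝 0))
    (hsq : ∀ x, deriv v x ^ 2 = wavePotential S r (v x)) (hnonpos : ∀ x, deriv v x ≤ 0) :
    ∃ K, ∀ᶠ x in atTop, |deriv v x + √S * v x| ≤ K * v x ^ 2 := by
  obtain ⟨K, hK⟩ := (wavePotential.sub_mul_sq_isBigO hS.ne' hr).bound
  refine ⟨K / √S, ?_⟩
  filter_upwards [hlim.eventually hK] with x hx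
  have hsS : 0 < √S := sqrt_pos.2 hS
  have hvx := hpos x
  rw [Real.norm_eq_abs, norm_pow, Real.norm_eq_abs, abs_of_pos hvx, ← hsq x] at hx
  have hfac : |deriv v x + √S * v x| * (√S * v x) ≤ |deriv v x ^ 2 - S * v x ^ 2| := by
    calc |deriv v x + √S * v x| * (√S * v x)
        ≤ |deriv v x + √S * v x| * |deriv v x - √S * v x| := by
          gcongr
          rw [abs_of_nonpos (by nlinarith [hnonpos x])]
          linarith [hnonpos x]
      _ = |deriv v x ^ 2 - S * v x ^ 2| := by
          rw [← abs_mul]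
          congr 1
          linear_combination -(v x ^ 2) * sq_sqrt hS.le
  refine le_of_mul_le_mul_right ?_ (mul_pos hsS hvx)
  calc |deriv v x + √S * v x| * (√S * v x) ≤ K * v x ^ 3 := hfac.trans hx
    _ = K / √S * v x ^ 2 * (√S * v x) := by field_simp

end StandingWave

theorem standing_wave_asymptotics (S r : ℝ) (hS : 0 < S) (hSr : S < 4 * r)
    (u₀ : ℝ → ℝ) (hu : ContDiff ℝ 2 u₀)
    (hode : ∀ x : ℝ, deriv (deriv u₀) x + S * fpoly (u₀ x)
      + (2 * S / r) * (2 * u₀ x - 1) * (deriv u₀ x) ^ 2 = 0)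
    (hlim0 : Tendsto u₀ atTop (𝓝 0))
    (hnorm : u₀ 0 = 1 / 2) (hmono : StrictAnti u₀)
    (hbound : ∀ x : ℝ, 0 < u₀ x ∧ u₀ x < 1) :
    ∃ C : ℝ, 0 < C ∧
      Tendsto (fun x : ℝ => u₀ x * Real.exp (Real.sqrt S * x)) atTop (𝓝 C) ∧
      Tendsto (fun x : ℝ => (1 - u₀ x) * Real.exp (-(Real.sqrt S) * x)) atBot (𝓝 C) ∧
      Tendsto (fun x : ℝ => deriv u₀ x * Real.exp (Real.sqrt S * x)) atTop
        (𝓝 (-(Real.sqrt S) * C)) := by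
  have hr : 0 < r := by linarith
  have hdiff : Differentiable ℝ u₀ := hu.differentiable two_ne_zero
  have hdiff' : Differentiable ℝ (deriv u₀) := (hu.deriv' (n := 1)).differentiable one_ne_zero
  have hnonpos : ∀ x, deriv u₀ x ≤ 0 := fun x => hmono.antitone.deriv_nonpos
  have hsq := sq_deriv_eq_wavePotential hS.ne' hr.ne' hdiff hdiff' hode hlim0 hnonpos
  have hder : ∀ x, HasDerivAt u₀ (-√(wavePotential S r (u₀ x))) x := fun x => by
    rw [← hsq x, sqrt_sq_eq_abs, abs_of_nonpos (hnonpos x), neg_neg]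
    exact (hdiff x).hasDerivAt
  obtain ⟨K, hK⟩ := eventually_abs_deriv_add_sqrt_mul_le hS hr.ne'
    (fun x => (hbound x).1) hlim0 hsq hnonpos
  obtain ⟨C, hC, hCtop, hC'⟩ := exists_tendsto_mul_exp_of_abs_deriv_add_le (sqrt_pos.2 hS) hdiff
    (fun x => (hbound x).1) hlim0 hK
  have hsymm : EqOn (fun x => 1 - u₀ (-x)) u₀ (Ici 0) := by
    refine eqOn_Ici_of_hasDerivAt_neg_sqrt_wavePotential hS hr (fun t => ?_) hder
      (fun t => ⟨by linarith [(hbound (-t)).2], by linarith [(hbound (-t)).1]⟩)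
      (fun t => hbound t) (by norm_num [hnorm])
    simpa [wavePotential.one_sub] using ((hder (-t)).comp t (hasDerivAt_neg t)).const_sub 1
  refine ⟨C, hC, hCtop, (hCtop.comp tendsto_neg_atBot_atTop).congr' ?_, hC'⟩
  filter_upwards [eventually_le_atBot 0] with x hx
  simp [← hsymm (neg_nonneg.2 hx)]
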